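/- (Coordinate curves of axially symmetric data are planar circles.) Let U ⊆ ℝ² be open and Φ : U → S³ ⊂ ℝ⁴ a smooth conformal immersion into S³ with conformal factor e^λ and Gauss map n. Assume that on U: ∂_{x₁}λ ≡ 0 (the conformal factor depends only on x₂), n·∂²_{x₁x₂}Φ ≡ 0 (the coordinate directions are principal), and ∂_{x₁}( n·∂²_{x₁x₁}Φ ) ≡ 0. Then at every point of U, with I₁₁ := n·∂²_{x₁x₁}Φ: ∂³_{x₁x₁x₁}Φ = −( (∂_{x₂}λ)² + e^{−2λ} I₁₁² + e^{2λ} ) ∂_{x₁}Φ. In particular, along each curve x₂ = const, Φ satisfies a linear second-order ODE for ∂_{x₁}Φ with constant coefficient, so its second osculating plane is constant and the curve lies in a fixed 2-dimensional affine plane of ℝ⁴. -/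

import Mathlib

noncomputable section

open Real MeasureTheory
open scoped ENNReal RealInnerProductSpace

/-- The plane `ℝ²`. -/
abbrev RR2 := ℝ × ℝ
/-- Euclidean `ℝ⁴`. -/
abbrev RR4 := EuclideanSpace ℝ (Fin 4)

/-- Partial derivative in the `x₁` direction of an `ℝ⁴`-valued map on `ℝ²`. -/
def d1 (f : RR2 → RR4) (x : RR2) : RR4 := fderiv ℝ f x (1, 0)
/-- Partial derivative in the `x₂` direction of an `ℝ⁴`-valued map on `ℝ²`. -/
def d2 (f : RR2 → RR4) (x : RR2) : RR4 := fderiv ℝ f x (0, 1)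
/-- Partial derivative in the `x₁` direction of a scalar map on `ℝ²`. -/
def d1s (f : RR2 → ℝ) (x : RR2) : ℝ := fderiv ℝ f x (1, 0)
/-- Partial derivative in the `x₂` direction of a scalar map on `ℝ²`. -/
def d2s (f : RR2 → ℝ) (x : RR2) : ℝ := fderiv ℝ f x (0, 1)

/-- Determinant of four vectors of `ℝ⁴`. -/
def det4 (a b c d : RR4) : ℝ :=
  Matrix.det (Matrix.of ![(fun i => a i), (fun i => b i), (fun i => c i), (fun i => d i)])

/-- `Φ : U → S³ ⊂ ℝ⁴` is a smooth conformal immersion into `S³` with conformal factor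
`e^lam` and (positively oriented) Gauss map `n`. -/
structure IsConformalImmersionS3 (U : Set RR2) (Φ : RR2 → RR4) (lam : RR2 → ℝ)
    (n : RR2 → RR4) : Prop where
  smooth_Phi : ContDiffOn ℝ (⊤ : ℕ∞) Φ U
  smooth_lam : ContDiffOn ℝ (⊤ : ℕ∞) lam U
  smooth_n : ContDiffOn ℝ (⊤ : ℕ∞) n U
  mem_sphere : ∀ x ∈ U, ‖Φ x‖ = 1
  conf_orth : ∀ x ∈ U, ⟪d1 Φ x, d2 Φ x⟫ = 0
  conf_norm1 : ∀ x ∈ U, ‖d1 Φ x‖ = exp (lam x)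
  conf_norm2 : ∀ x ∈ U, ‖d2 Φ x‖ = exp (lam x)
  n_norm : ∀ x ∈ U, ‖n x‖ = 1
  n_orth_Phi : ∀ x ∈ U, ⟪n x, Φ x⟫ = 0
  n_orth_d1 : ∀ x ∈ U, ⟪n x, d1 Φ x⟫ = 0
  n_orth_d2 : ∀ x ∈ U, ⟪n x, d2 Φ x⟫ = 0
  oriented : ∀ x ∈ U, 0 < det4 (Φ x) (d1 Φ x) (d2 Φ x) (n x)

/-- Second fundamental form coefficient `I₁₁ = n·∂²_{x₁x₁}Φ`. -/
def I11 (Φ n : RR2 → RR4) (x : RR2) : ℝ := ⟪n x, d1 (d1 Φ) x⟫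
/-- Second fundamental form coefficient `I₁₂ = n·∂²_{x₁x₂}Φ`. -/
def I12 (Φ n : RR2 → RR4) (x : RR2) : ℝ := ⟪n x, d2 (d1 Φ) x⟫
/-- Second fundamental form coefficient `I₂₂ = n·∂²_{x₂x₂}Φ`. -/
def I22 (Φ n : RR2 → RR4) (x : RR2) : ℝ := ⟪n x, d2 (d2 Φ) x⟫

/-- Mean curvature `H = (1/2) e^{-2λ} (I₁₁ + I₂₂)`. -/
def meanCurv (Φ : RR2 → RR4) (lam : RR2 → ℝ) (n : RR2 → RR4) (x : RR2) : ℝ :=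
  (1 / 2) * exp (-(2 * lam x)) * (I11 Φ n x + I22 Φ n x)

/-- Trace-free Weingarten coefficient `I⁰₁₁ = (I₁₁ - I₂₂)/2`. -/
def I011 (Φ n : RR2 → RR4) (x : RR2) : ℝ := (I11 Φ n x - I22 Φ n x) / 2
/-- Trace-free Weingarten coefficient `I⁰₁₂ = I₁₂`. -/
def I012 (Φ n : RR2 → RR4) (x : RR2) : ℝ := I12 Φ n x

/-!
The frame `(Φ, ∂₁Φ, ∂₂Φ, n)` is orthogonal with norms `1, e^λ, e^λ, 1`, so a vector of `ℝ⁴` is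
determined by its inner products with it. Differentiating the defining relations of a conformal
immersion into `S³` computes these inner products for `∂₁∂₁Φ`, `∂₂∂₁Φ` and `∂₁n`, which gives the
Gauss–Weingarten equations
`∂₁∂₁Φ = -e^{2λ} Φ + ∂₁λ ∂₁Φ - ∂₂λ ∂₂Φ + I₁₁ n`, `∂₂∂₁Φ = ∂₂λ ∂₁Φ + ∂₁λ ∂₂Φ + I₁₂ n` and
`∂₁n = -e^{-2λ} (I₁₁ ∂₁Φ + I₁₂ ∂₂Φ)`.
Under the hypotheses the coefficients of the first equation do not depend on `x₁` (for `∂₂λ`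
by symmetry of second derivatives), so differentiating it once more in `x₁` and substituting the
other two equations leaves `-((∂₂λ)² + e^{-2λ} I₁₁² + e^{2λ}) ∂₁Φ`.
-/

section Calculus

variable {E F : Type*} [NormedAddCommGroup E] [NormedSpace ℝ E] [NormedAddCommGroup F]
  [NormedSpace ℝ F] {U : Set E} {x : E}

theorem ContDiffOn.fderiv_apply_of_isOpen {f : E → F} (hf : ContDiffOn ℝ (⊤ : ℕ∞) f U)
    (hU : IsOpen U) (v : E) : ContDiffOn ℝ (⊤ : ℕ∞) (fun y => fderiv ℝ f y v) U :=
  (hf.fderiv_of_isOpen hU le_rfl).clm_apply contDiffOn_const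

theorem ContDiffOn.differentiableAt_of_isOpen {f : E → F} (hf : ContDiffOn ℝ (⊤ : ℕ∞) f U)
    (hU : IsOpen U) (hx : x ∈ U) : DifferentiableAt ℝ f x :=
  (hf.contDiffAt (hU.mem_nhds hx)).differentiableAt (by simp)

theorem fderiv_fderiv_apply_comm {f : E → F} (hf : ContDiffAt ℝ 2 f x) (v w : E) :
    fderiv ℝ (fun y => fderiv ℝ f y v) x w = fderiv ℝ (fun y => fderiv ℝ f y w) x v := by
  have hdiff : DifferentiableAt ℝ (fderiv ℝ f) x :=
    (hf.fderiv_right (m := 1) le_rfl).differentiableAt one_ne_zero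
  have happly (u : E) : fderiv ℝ (fun y => fderiv ℝ f y u) x
      = (ContinuousLinearMap.apply ℝ F u).comp (fderiv ℝ (fderiv ℝ f) x) :=
    ((ContinuousLinearMap.apply ℝ F u).hasFDerivAt.comp x hdiff.hasFDerivAt).fderiv
  rw [happly, happly]
  exact hf.isSymmSndFDerivAt (by simp) w v

theorem fderiv_apply_eq_of_eqOn {f g : E → F} (hU : IsOpen U) (hx : x ∈ U)
    (h : ∀ y ∈ U, f y = g y) (v : E) : fderiv ℝ f x v = fderiv ℝ g x v := by
  rw [Filter.EventuallyEq.fderiv_eq (Filter.eventually_of_mem (hU.mem_nhds hx) h)]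

theorem fderiv_apply_eq_zero_of_eqOn_const {f : E → F} {c : F} (hU : IsOpen U) (hx : x ∈ U)
    (h : ∀ y ∈ U, f y = c) (v : E) : fderiv ℝ f x v = 0 := by
  rw [fderiv_apply_eq_of_eqOn hU hx h, fderiv_const_apply, zero_apply]

theorem fderiv_exp_two_mul_apply {lam : E → ℝ} (hlam : DifferentiableAt ℝ lam x) (v : E) :
    fderiv ℝ (fun y => exp (2 * lam y)) x v = 2 * exp (2 * lam x) * fderiv ℝ lam x v := by
  rw [((hlam.hasFDerivAt.const_mul 2).exp).fderiv]
  simp only [smul_apply, smul_eq_mul]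
  ring

end Calculus

section InnerCalculus

variable {E F : Type*} [NormedAddCommGroup E] [NormedSpace ℝ E] [NormedAddCommGroup F]
  [InnerProductSpace ℝ F] {U : Set E} {x : E}

theorem inner_fderiv_add_inner_fderiv_of_eqOn {f g : E → F} {c : E → ℝ} (hU : IsOpen U)
    (hx : x ∈ U) (hf : DifferentiableAt ℝ f x) (hg : DifferentiableAt ℝ g x)
    (h : ∀ y ∈ U, ⟪f y, g y⟫ = c y) (v : E) :
    ⟪fderiv ℝ f x v, g x⟫ + ⟪f x, fderiv ℝ g x v⟫ = fderiv ℝ c x v := by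
  rw [← Filter.EventuallyEq.fderiv_eq (Filter.eventually_of_mem (hU.mem_nhds hx) h),
    fderiv_inner_apply ℝ hf hg, add_comm]

theorem inner_fderiv_add_inner_fderiv_eq_zero_of_eqOn_const {f g : E → F} {c : ℝ}
    (hU : IsOpen U) (hx : x ∈ U) (hf : DifferentiableAt ℝ f x) (hg : DifferentiableAt ℝ g x)
    (h : ∀ y ∈ U, ⟪f y, g y⟫ = c) (v : E) :
    ⟪fderiv ℝ f x v, g x⟫ + ⟪f x, fderiv ℝ g x v⟫ = 0 := by
  rw [inner_fderiv_add_inner_fderiv_of_eqOn hU hx hf hg (c := fun _ => c) h, fderiv_const_apply,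
    zero_apply]

theorem inner_fderiv_apply_of_norm_sq_eqOn {f : E → F} {c : E → ℝ} (hU : IsOpen U) (hx : x ∈ U)
    (hf : DifferentiableAt ℝ f x) (h : ∀ y ∈ U, ‖f y‖ ^ 2 = c y) (v : E) :
    2 * ⟪f x, fderiv ℝ f x v⟫ = fderiv ℝ c x v := by
  rw [← inner_fderiv_add_inner_fderiv_of_eqOn hU hx hf hf
    (fun y hy => (real_inner_self_eq_norm_sq (f y)).trans (h y hy)), real_inner_comm]
  ring

theorem inner_fderiv_apply_eq_zero_of_norm_eq_one {f : E → F} (hU : IsOpen U) (hx : x ∈ U)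
    (hf : DifferentiableAt ℝ f x) (h : ∀ y ∈ U, ‖f y‖ = 1) (v : E) :
    ⟪f x, fderiv ℝ f x v⟫ = 0 := by
  have := inner_fderiv_apply_of_norm_sq_eqOn hU hx hf (c := fun _ => 1)
    (fun y hy => by rw [h y hy, one_pow]) v
  rw [fderiv_const_apply, zero_apply] at this
  linarith

end InnerCalculus

theorem eq_of_forall_inner_eq_of_orthogonal {𝕜 E ι : Type*} [RCLike 𝕜] [NormedAddCommGroup E]
    [InnerProductSpace 𝕜 E] [FiniteDimensional 𝕜 E] [Fintype ι] {v : ι → E}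
    (hcard : Fintype.card ι = Module.finrank 𝕜 E) (hv : ∀ i, v i ≠ 0)
    (horth : Pairwise fun i j => inner 𝕜 (v i) (v j) = 0) {a b : E}
    (hab : ∀ i, inner 𝕜 (v i) a = inner 𝕜 (v i) b) : a = b := by
  have hli := linearIndependent_of_ne_zero_of_inner_eq_zero hv horth
  let basis := Module.Basis.mk hli (hli.span_eq_top_of_card_eq_finrank' hcard).ge
  exact InnerProductSpace.ext_inner_left_basis basis fun i => by simpa [basis] using hab i

namespace IsConformalImmersionS3

variable {U : Set RR2} {Φ : RR2 → RR4} {lam : RR2 → ℝ} {n : RR2 → RR4} {x : RR2}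

theorem differentiableAt_Phi (h : IsConformalImmersionS3 U Φ lam n) (hU : IsOpen U)
    (hx : x ∈ U) : DifferentiableAt ℝ Φ x :=
  h.smooth_Phi.differentiableAt_of_isOpen hU hx

theorem differentiableAt_d1 (h : IsConformalImmersionS3 U Φ lam n) (hU : IsOpen U)
    (hx : x ∈ U) : DifferentiableAt ℝ (d1 Φ) x :=
  (h.smooth_Phi.fderiv_apply_of_isOpen hU _).differentiableAt_of_isOpen hU hx

theorem differentiableAt_d2 (h : IsConformalImmersionS3 U Φ lam n) (hU : IsOpen U)
    (hx : x ∈ U) : DifferentiableAt ℝ (d2 Φ) x :=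
  (h.smooth_Phi.fderiv_apply_of_isOpen hU _).differentiableAt_of_isOpen hU hx

theorem differentiableAt_n (h : IsConformalImmersionS3 U Φ lam n) (hU : IsOpen U)
    (hx : x ∈ U) : DifferentiableAt ℝ n x :=
  h.smooth_n.differentiableAt_of_isOpen hU hx

theorem differentiableAt_lam (h : IsConformalImmersionS3 U Φ lam n) (hU : IsOpen U)
    (hx : x ∈ U) : DifferentiableAt ℝ lam x :=
  h.smooth_lam.differentiableAt_of_isOpen hU hx

theorem differentiableAt_d2s_lam (h : IsConformalImmersionS3 U Φ lam n) (hU : IsOpen U)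
    (hx : x ∈ U) : DifferentiableAt ℝ (d2s lam) x :=
  (h.smooth_lam.fderiv_apply_of_isOpen hU _).differentiableAt_of_isOpen hU hx

theorem differentiableAt_I11 (h : IsConformalImmersionS3 U Φ lam n) (hU : IsOpen U)
    (hx : x ∈ U) : DifferentiableAt ℝ (I11 Φ n) x :=
  (h.differentiableAt_n hU hx).inner ℝ
    (((h.smooth_Phi.fderiv_apply_of_isOpen hU _).fderiv_apply_of_isOpen hU _
      ).differentiableAt_of_isOpen hU hx)

theorem d1_d2_comm (h : IsConformalImmersionS3 U Φ lam n) (hU : IsOpen U) (hx : x ∈ U) :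
    d1 (d2 Φ) x = d2 (d1 Φ) x :=
  fderiv_fderiv_apply_comm ((h.smooth_Phi.contDiffAt (hU.mem_nhds hx)).of_le
    (WithTop.coe_le_coe.mpr le_top)) _ _

theorem d1s_d2s_lam_comm (h : IsConformalImmersionS3 U Φ lam n) (hU : IsOpen U) (hx : x ∈ U) :
    d1s (d2s lam) x = d2s (d1s lam) x :=
  fderiv_fderiv_apply_comm ((h.smooth_lam.contDiffAt (hU.mem_nhds hx)).of_le
    (WithTop.coe_le_coe.mpr le_top)) _ _

theorem norm_d1_sq (h : IsConformalImmersionS3 U Φ lam n) (hx : x ∈ U) :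
    ‖d1 Φ x‖ ^ 2 = exp (2 * lam x) := by
  rw [h.conf_norm1 x hx, sq, ← exp_add, two_mul]

theorem norm_d2_sq (h : IsConformalImmersionS3 U Φ lam n) (hx : x ∈ U) :
    ‖d2 Φ x‖ ^ 2 = exp (2 * lam x) := by
  rw [h.conf_norm2 x hx, sq, ← exp_add, two_mul]

theorem inner_Phi_d1 (h : IsConformalImmersionS3 U Φ lam n) (hU : IsOpen U) (hx : x ∈ U) :
    ⟪Φ x, d1 Φ x⟫ = 0 :=
  inner_fderiv_apply_eq_zero_of_norm_eq_one hU hx (h.differentiableAt_Phi hU hx) h.mem_sphere _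

theorem inner_Phi_d2 (h : IsConformalImmersionS3 U Φ lam n) (hU : IsOpen U) (hx : x ∈ U) :
    ⟪Φ x, d2 Φ x⟫ = 0 :=
  inner_fderiv_apply_eq_zero_of_norm_eq_one hU hx (h.differentiableAt_Phi hU hx) h.mem_sphere _

theorem eq_frame_combination (h : IsConformalImmersionS3 U Φ lam n) (hU : IsOpen U)
    (hx : x ∈ U) {w : RR4} {a b c d : ℝ} (hΦ : ⟪Φ x, w⟫ = a)
    (h₁ : ⟪d1 Φ x, w⟫ = exp (2 * lam x) * b) (h₂ : ⟪d2 Φ x, w⟫ = exp (2 * lam x) * c)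
    (hn : ⟪n x, w⟫ = d) :
    w = a • Φ x + b • d1 Φ x + c • d2 Φ x + d • n x := by
  have hΦ₁ := h.inner_Phi_d1 hU hx
  have hΦ₂ := h.inner_Phi_d2 hU hx
  have hnΦ := h.n_orth_Phi x hx
  have hn₁ := h.n_orth_d1 x hx
  have hn₂ := h.n_orth_d2 x hx
  have h₁₂ := h.conf_orth x hx
  have h₁Φ : ⟪d1 Φ x, Φ x⟫ = 0 := by rwa [real_inner_comm]
  have h₂Φ : ⟪d2 Φ x, Φ x⟫ = 0 := by rwa [real_inner_comm]
  have hΦn : ⟪Φ x, n x⟫ = 0 := by rwa [real_inner_comm]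
  have h₁n : ⟪d1 Φ x, n x⟫ = 0 := by rwa [real_inner_comm]
  have h₂n : ⟪d2 Φ x, n x⟫ = 0 := by rwa [real_inner_comm]
  have h₂₁ : ⟪d2 Φ x, d1 Φ x⟫ = 0 := by rwa [real_inner_comm]
  refine eq_of_forall_inner_eq_of_orthogonal (𝕜 := ℝ) (v := ![Φ x, d1 Φ x, d2 Φ x, n x])
    (by simp) (fun i => ?_) (fun i j hij => ?_) (fun i => ?_)
  · refine ne_zero_of_norm_ne_zero ?_
    fin_cases i <;> simp [h.mem_sphere x hx, h.conf_norm1 x hx, h.conf_norm2 x hx, h.n_norm x hx]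
  · fin_cases i <;> fin_cases j <;> simp_all
  · fin_cases i <;> simp [inner_add_right, real_inner_smul_right, h.mem_sphere x hx,
      h.n_norm x hx, h.norm_d1_sq hx, h.norm_d2_sq hx, mul_comm, *]

theorem inner_Phi_d1_d1 (h : IsConformalImmersionS3 U Φ lam n) (hU : IsOpen U) (hx : x ∈ U) :
    ⟪Φ x, d1 (d1 Φ) x⟫ = -exp (2 * lam x) := by
  have hderiv : ⟪d1 Φ x, d1 Φ x⟫ + ⟪Φ x, d1 (d1 Φ) x⟫ = 0 :=
    inner_fderiv_add_inner_fderiv_eq_zero_of_eqOn_const hU hx (h.differentiableAt_Phi hU hx)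
      (h.differentiableAt_d1 hU hx) (fun y hy => h.inner_Phi_d1 hU hy) _
  rw [real_inner_self_eq_norm_sq, h.norm_d1_sq hx] at hderiv
  linarith

theorem inner_Phi_d2_d1 (h : IsConformalImmersionS3 U Φ lam n) (hU : IsOpen U) (hx : x ∈ U) :
    ⟪Φ x, d2 (d1 Φ) x⟫ = 0 := by
  have hderiv : ⟪d2 Φ x, d1 Φ x⟫ + ⟪Φ x, d2 (d1 Φ) x⟫ = 0 :=
    inner_fderiv_add_inner_fderiv_eq_zero_of_eqOn_const hU hx (h.differentiableAt_Phi hU hx)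
      (h.differentiableAt_d1 hU hx) (fun y hy => h.inner_Phi_d1 hU hy) _
  rw [real_inner_comm, h.conf_orth x hx, zero_add] at hderiv
  exact hderiv

theorem inner_d1_d1_d1 (h : IsConformalImmersionS3 U Φ lam n) (hU : IsOpen U) (hx : x ∈ U) :
    ⟪d1 Φ x, d1 (d1 Φ) x⟫ = exp (2 * lam x) * d1s lam x := by
  have hderiv : 2 * ⟪d1 Φ x, d1 (d1 Φ) x⟫ = 2 * exp (2 * lam x) * d1s lam x :=
    (inner_fderiv_apply_of_norm_sq_eqOn hU hx (h.differentiableAt_d1 hU hx)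
      (fun y hy => h.norm_d1_sq hy) _).trans
      (fderiv_exp_two_mul_apply (h.differentiableAt_lam hU hx) _)
  linarith

theorem inner_d1_d2_d1 (h : IsConformalImmersionS3 U Φ lam n) (hU : IsOpen U) (hx : x ∈ U) :
    ⟪d1 Φ x, d2 (d1 Φ) x⟫ = exp (2 * lam x) * d2s lam x := by
  have hderiv : 2 * ⟪d1 Φ x, d2 (d1 Φ) x⟫ = 2 * exp (2 * lam x) * d2s lam x :=
    (inner_fderiv_apply_of_norm_sq_eqOn hU hx (h.differentiableAt_d1 hU hx)
      (fun y hy => h.norm_d1_sq hy) _).trans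
      (fderiv_exp_two_mul_apply (h.differentiableAt_lam hU hx) _)
  linarith

theorem inner_d2_d2_d1 (h : IsConformalImmersionS3 U Φ lam n) (hU : IsOpen U) (hx : x ∈ U) :
    ⟪d2 Φ x, d2 (d1 Φ) x⟫ = exp (2 * lam x) * d1s lam x := by
  have hderiv : 2 * ⟪d2 Φ x, d1 (d2 Φ) x⟫ = 2 * exp (2 * lam x) * d1s lam x :=
    (inner_fderiv_apply_of_norm_sq_eqOn hU hx (h.differentiableAt_d2 hU hx)
      (fun y hy => h.norm_d2_sq hy) _).trans
      (fderiv_exp_two_mul_apply (h.differentiableAt_lam hU hx) _)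
  rw [h.d1_d2_comm hU hx] at hderiv
  linarith

theorem inner_d2_d1_d1 (h : IsConformalImmersionS3 U Φ lam n) (hU : IsOpen U) (hx : x ∈ U) :
    ⟪d2 Φ x, d1 (d1 Φ) x⟫ = exp (2 * lam x) * -d2s lam x := by
  have hderiv : ⟪d1 (d1 Φ) x, d2 Φ x⟫ + ⟪d1 Φ x, d1 (d2 Φ) x⟫ = 0 :=
    inner_fderiv_add_inner_fderiv_eq_zero_of_eqOn_const hU hx (h.differentiableAt_d1 hU hx)
      (h.differentiableAt_d2 hU hx) h.conf_orth _
  rw [h.d1_d2_comm hU hx, h.inner_d1_d2_d1 hU hx, real_inner_comm] at hderiv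
  linarith

theorem d1_d1_eq (h : IsConformalImmersionS3 U Φ lam n) (hU : IsOpen U) (hx : x ∈ U) :
    d1 (d1 Φ) x = (-exp (2 * lam x)) • Φ x + d1s lam x • d1 Φ x + (-d2s lam x) • d2 Φ x
      + I11 Φ n x • n x :=
  h.eq_frame_combination hU hx (h.inner_Phi_d1_d1 hU hx) (h.inner_d1_d1_d1 hU hx)
    (h.inner_d2_d1_d1 hU hx) rfl

theorem d2_d1_eq (h : IsConformalImmersionS3 U Φ lam n) (hU : IsOpen U) (hx : x ∈ U) :
    d2 (d1 Φ) x = d2s lam x • d1 Φ x + d1s lam x • d2 Φ x + I12 Φ n x • n x := by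
  simpa [I12] using h.eq_frame_combination hU hx (h.inner_Phi_d2_d1 hU hx)
    (h.inner_d1_d2_d1 hU hx) (h.inner_d2_d2_d1 hU hx) rfl

theorem d1_n_eq (h : IsConformalImmersionS3 U Φ lam n) (hU : IsOpen U) (hx : x ∈ U) :
    d1 n x = (-(exp (-(2 * lam x)) * I11 Φ n x)) • d1 Φ x
      + (-(exp (-(2 * lam x)) * I12 Φ n x)) • d2 Φ x := by
  have hdn := h.differentiableAt_n hU hx
  have hΦ : ⟪d1 n x, Φ x⟫ + ⟪n x, d1 Φ x⟫ = 0 :=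
    inner_fderiv_add_inner_fderiv_eq_zero_of_eqOn_const hU hx hdn (h.differentiableAt_Phi hU hx)
      h.n_orth_Phi _
  have h₁ : ⟪d1 n x, d1 Φ x⟫ + I11 Φ n x = 0 :=
    inner_fderiv_add_inner_fderiv_eq_zero_of_eqOn_const hU hx hdn (h.differentiableAt_d1 hU hx)
      h.n_orth_d1 _
  have h₂ : ⟪d1 n x, d2 Φ x⟫ + I12 Φ n x = 0 := by
    rw [I12, ← h.d1_d2_comm hU hx]
    exact inner_fderiv_add_inner_fderiv_eq_zero_of_eqOn_const hU hx hdn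
      (h.differentiableAt_d2 hU hx) h.n_orth_d2 _
  have hn : ⟪n x, d1 n x⟫ = 0 := inner_fderiv_apply_eq_zero_of_norm_eq_one hU hx hdn h.n_norm _
  rw [h.n_orth_d1 x hx, add_zero] at hΦ
  have hexp : exp (2 * lam x) * exp (-(2 * lam x)) = 1 := by
    rw [← exp_add, add_neg_cancel, exp_zero]
  simpa using h.eq_frame_combination hU hx (a := 0) (b := -(exp (-(2 * lam x)) * I11 Φ n x))
    (c := -(exp (-(2 * lam x)) * I12 Φ n x)) (d := 0)
    (by rw [real_inner_comm, hΦ])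
    (by rw [real_inner_comm]; linear_combination h₁ + I11 Φ n x * hexp)
    (by rw [real_inner_comm]; linear_combination h₂ + I12 Φ n x * hexp) hn

end IsConformalImmersionS3

theorem d1_add {f g : RR2 → RR4} {x : RR2} (hf : DifferentiableAt ℝ f x)
    (hg : DifferentiableAt ℝ g x) : d1 (fun y => f y + g y) x = d1 f x + d1 g x := by
  rw [d1, fderiv_fun_add hf hg, add_apply]
  rfl

theorem d1_smul {c : RR2 → ℝ} {f : RR2 → RR4} {x : RR2} (hc : DifferentiableAt ℝ c x)
    (hf : DifferentiableAt ℝ f x) : d1 (fun y => c y • f y) x = d1s c x • f x + c x • d1 f x := by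
  rw [d1, fderiv_fun_smul hc hf]
  simp only [add_apply, smul_apply, ContinuousLinearMap.smulRight_apply]
  exact add_comm _ _

/-- **coordinate curves of axially symmetric data are planar circles.**
If a smooth conformal immersion `Φ : U → S³` has `∂_{x₁}λ ≡ 0`, `n·∂²_{x₁x₂}Φ ≡ 0` and
`∂_{x₁}(n·∂²_{x₁x₁}Φ) ≡ 0` on `U`, then
`∂³_{x₁x₁x₁}Φ = -((∂_{x₂}λ)² + e^{-2λ}I₁₁² + e^{2λ}) ∂_{x₁}Φ` on `U`; in particular each
curve `x₂ = const` lies in a fixed 2-plane of `ℝ⁴` and is a planar circle. -/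
theorem axially_symmetric_coordinate_curves
    (U : Set RR2) (hU : IsOpen U)
    (Φ : RR2 → RR4) (lam : RR2 → ℝ) (n : RR2 → RR4)
    (h : IsConformalImmersionS3 U Φ lam n)
    (hlam : ∀ x ∈ U, d1s lam x = 0)
    (hprincipal : ∀ x ∈ U, I12 Φ n x = 0)
    (hI11 : ∀ x ∈ U, d1s (I11 Φ n) x = 0) :
    ∀ x ∈ U,
      d1 (d1 (d1 Φ)) x
        = -((d2s lam x) ^ 2 + exp (-(2 * lam x)) * (I11 Φ n x) ^ 2
            + exp (2 * lam x)) • d1 Φ x := by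
  intro x hx
  have hGauss : ∀ y ∈ U, d1 (d1 Φ) y
      = (-exp (2 * lam y)) • Φ y + (-d2s lam y) • d2 Φ y + I11 Φ n y • n y := fun y hy => by
    rw [h.d1_d1_eq hU hy, hlam y hy, zero_smul, add_zero]
  have hΦ := h.differentiableAt_Phi hU hx
  have hΦ₂ := h.differentiableAt_d2 hU hx
  have hn := h.differentiableAt_n hU hx
  have hI := h.differentiableAt_I11 hU hx
  have hlam' := h.differentiableAt_lam hU hx
  have hμ := h.differentiableAt_d2s_lam hU hx
  have hexp : d1s (fun y => -exp (2 * lam y)) x = 0 := by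
    rw [d1s, fderiv_fun_neg, neg_apply, fderiv_exp_two_mul_apply hlam',
      show fderiv ℝ lam x (1, 0) = 0 from hlam x hx, mul_zero, neg_zero]
  have hμ₁ : d1s (fun y => -d2s lam y) x = 0 := by
    rw [d1s, fderiv_fun_neg, neg_apply, neg_eq_zero]
    exact (h.d1s_d2s_lam_comm hU hx).trans (fderiv_apply_eq_zero_of_eqOn_const hU hx hlam _)
  calc d1 (d1 (d1 Φ)) x
      = d1 (fun y => (-exp (2 * lam y)) • Φ y + (-d2s lam y) • d2 Φ y + I11 Φ n y • n y) x :=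
        fderiv_apply_eq_of_eqOn hU hx hGauss _
    _ = (-exp (2 * lam x)) • d1 Φ x + (-d2s lam x) • d1 (d2 Φ) x + I11 Φ n x • d1 n x := by
        rw [d1_add (by fun_prop) (by fun_prop), d1_add (by fun_prop) (by fun_prop),
          d1_smul (by fun_prop) hΦ, d1_smul (by fun_prop) hΦ₂, d1_smul hI hn, hexp, hμ₁,
          hI11 x hx]
        simp only [zero_smul, zero_add]
    _ = _ := by
        rw [h.d1_d2_comm hU hx, h.d2_d1_eq hU hx, h.d1_n_eq hU hx, hlam x hx, hprincipal x hx]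
        module
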